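/- arXiv:0906.1957 — 2 statements merged into one kernel-verified Lean document; each statement's English description precedes it below -/
import Mathlib

section
/- Every sequence f : ℕ → ℂ satisfying f(n) = Γ(n·√2)/Γ(n·√3) for all n ≥ 1, where Γ is the Gamma function evaluated at positive real arguments, is not holonomic. -/
/-- A sequence `f : ℕ → ℂ` is *holonomic* (P-recursive) if there exist `d ∈ ℕ`,
polynomials `p_0, …, p_d ∈ ℂ[X]`, not all zero, and `N ∈ ℕ` such that
`∑_{k=0}^d p_k(n) · f(n+k) = 0` for all `n ≥ N`. -/
def IsHolonomic (f : ℕ → ℂ) : Prop :=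
  ∃ (d N : ℕ) (p : Fin (d + 1) → Polynomial ℂ),
    (∃ k, p k ≠ 0) ∧
    ∀ n : ℕ, N ≤ n → ∑ k : Fin (d + 1), (p k).eval (n : ℂ) * f (n + (k : ℕ)) = 0

open Real Filter Asymptotics Set

/-!
By log-convexity of `Γ`, `Γ(x + a) ≍ x ^ a Γ(x)` as `x → ∞` for every fixed `a ≥ 0`, so
`g(n) = Γ(n b) / Γ(n c)` satisfies `g(n + k) ≍ n ^ ((b - c) k) g(n)`. In a recurrence
`∑ p_k(n) f(n + k) = 0` the `k`-th term is then `≍ n ^ (deg p_k + (b - c) k) g(n)`. When `b - c`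
is irrational these exponents are pairwise distinct, so the term with the largest one dominates
all the others and the sum cannot vanish.
-/

theorem Asymptotics.IsTheta.comp_tendsto {α β E F : Type*} [Norm E] [Norm F] {f : α → E}
    {g : α → F} {l : Filter α} {l' : Filter β} (h : f =Θ[l] g) {k : β → α}
    (hk : Tendsto k l' l) : (f ∘ k) =Θ[l'] (g ∘ k) :=
  ⟨h.1.comp_tendsto hk, h.2.comp_tendsto hk⟩

namespace Real

theorem Gamma_add_le_rpow_mul_Gamma {x a : ℝ} (hx : 0 < x) (ha₀ : 0 ≤ a) (ha₁ : a ≤ 1) :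
    Gamma (x + a) ≤ x ^ a * Gamma x := by
  have hconv := convexOn_log_Gamma.2 (mem_Ioi.2 hx) (mem_Ioi.2 (by linarith : 0 < x + 1))
    (sub_nonneg.2 ha₁) ha₀ (sub_add_cancel 1 a)
  simp only [smul_eq_mul, Function.comp_apply] at hconv
  rw [show (1 - a) * x + a * (x + 1) = x + a by ring, Gamma_add_one hx.ne',
    log_mul hx.ne' (Gamma_pos_of_pos hx).ne'] at hconv
  calc Gamma (x + a) = exp (log (Gamma (x + a))) := (exp_log (by positivity)).symm
    _ ≤ exp (log x * a + log (Gamma x)) := exp_le_exp.2 (by linarith)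
    _ = x ^ a * Gamma x := by rw [exp_add, exp_log (by positivity), rpow_def_of_pos hx]

theorem rpow_mul_Gamma_le_two_mul_Gamma_add {x a : ℝ} (hx : 1 ≤ x) (ha₀ : 0 ≤ a)
    (ha₁ : a ≤ 1) : x ^ a * Gamma x ≤ 2 * Gamma (x + a) := by
  have hx₀ : 0 < x := by linarith
  have hstep : x * Gamma x ≤ (x + a) ^ (1 - a) * Gamma (x + a) := by
    simpa [Gamma_add_one hx₀.ne'] using
      Gamma_add_le_rpow_mul_Gamma (by linarith : 0 < x + a) (sub_nonneg.2 ha₁) (by linarith)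
  have h2 : (2 : ℝ) ^ (1 - a) ≤ 2 := by
    simpa using rpow_le_rpow_of_exponent_le one_le_two (by linarith : 1 - a ≤ 1)
  refine le_of_mul_le_mul_right ?_ (rpow_pos_of_pos hx₀ (1 - a))
  calc x ^ a * Gamma x * x ^ (1 - a) = x * Gamma x := by
        rw [mul_right_comm, ← rpow_add hx₀, add_sub_cancel, rpow_one]
    _ ≤ (x + a) ^ (1 - a) * Gamma (x + a) := hstep
    _ ≤ (2 * x) ^ (1 - a) * Gamma (x + a) := by gcongr; linarith
    _ = 2 ^ (1 - a) * x ^ (1 - a) * Gamma (x + a) := by rw [mul_rpow zero_le_two hx₀.le]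
    _ ≤ 2 * Gamma (x + a) * x ^ (1 - a) := by
        rw [mul_right_comm]
        gcongr

theorem isTheta_Gamma_add_of_le_one {a : ℝ} (ha₀ : 0 ≤ a) (ha₁ : a ≤ 1) :
    (fun x => Gamma (x + a)) =Θ[atTop] fun x => x ^ a * Gamma x := by
  refine ⟨.of_bound 1 ?_, .of_bound 2 ?_⟩ <;>
    filter_upwards [eventually_ge_atTop 1, eventually_gt_atTop 0] with x hx hx₀
  · rw [norm_of_nonneg (by positivity), norm_of_nonneg (by positivity), one_mul]
    exact Gamma_add_le_rpow_mul_Gamma hx₀ ha₀ ha₁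
  · rw [norm_of_nonneg (by positivity), norm_of_nonneg (by positivity)]
    exact rpow_mul_Gamma_le_two_mul_Gamma_add hx ha₀ ha₁

theorem isTheta_Gamma_add {a : ℝ} (ha : 0 ≤ a) :
    (fun x => Gamma (x + a)) =Θ[atTop] fun x => x ^ a * Gamma x := by
  suffices h : ∀ (k : ℕ) {b : ℝ}, 0 ≤ b → b ≤ 1 →
      (fun x => Gamma (x + (b + k))) =Θ[atTop] fun x => x ^ (b + k) * Gamma x by
    simpa using h ⌊a⌋₊ (sub_nonneg.2 (Nat.floor_le ha)) (by linarith [Nat.lt_floor_add_one a])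
  intro k b hb₀ hb₁
  induction k with
  | zero => simpa using isTheta_Gamma_add_of_le_one hb₀ hb₁
  | succ k ih =>
    have hlin : (fun x : ℝ => x + (b + k)) =Θ[atTop] fun x => x :=
      (isLittleO_const_id_atTop _).right_isTheta_add'.symm
    refine EventuallyEq.trans_isTheta ?_ ((hlin.mul ih).trans_eventuallyEq ?_) <;>
      filter_upwards [eventually_gt_atTop 0] with x hx
    · rw [Nat.cast_succ, ← add_assoc, ← add_assoc, Gamma_add_one (by positivity), add_assoc]
    · rw [Nat.cast_succ, ← add_assoc, rpow_add_one hx.ne']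
      ring

theorem isTheta_Gamma_natCast_add_mul {c : ℝ} (hc : 0 < c) (k : ℕ) :
    (fun n : ℕ => Gamma (((n + k : ℕ) : ℝ) * c)) =Θ[atTop]
      fun n : ℕ => (n : ℝ) ^ (k * c) * Gamma (n * c) := by
  have hlim : Tendsto (fun n : ℕ => (n : ℝ) * c) atTop atTop :=
    tendsto_natCast_atTop_atTop.atTop_mul_const hc
  have h := isTheta_Gamma_add (by positivity : 0 ≤ (k : ℝ) * c)
  have hscale : (fun n : ℕ => ((n : ℝ) * c) ^ ((k : ℝ) * c) * Gamma (n * c)) =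
      fun n : ℕ => c ^ ((k : ℝ) * c) * ((n : ℝ) ^ ((k : ℝ) * c) * Gamma (n * c)) := by
    ext n
    rw [mul_rpow n.cast_nonneg hc.le]
    ring
  have hshift : (fun n : ℕ => Gamma (((n + k : ℕ) : ℝ) * c)) =
      fun n : ℕ => Gamma (n * c + k * c) := by
    ext n
    push_cast
    ring_nf
  rw [hshift, ← isTheta_const_mul_right (rpow_pos_of_pos hc ((k : ℝ) * c)).ne', ← hscale]
  exact h.comp_tendsto hlim

theorem isTheta_Gamma_div_Gamma_natCast_add {b c : ℝ} (hb : 0 < b) (hc : 0 < c) (k : ℕ) :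
    (fun n : ℕ => Gamma (((n + k : ℕ) : ℝ) * b) / Gamma (((n + k : ℕ) : ℝ) * c))
      =Θ[atTop] fun n : ℕ => (n : ℝ) ^ ((b - c) * k) * (Gamma (n * b) / Gamma (n * c)) := by
  refine ((isTheta_Gamma_natCast_add_mul hb k).div
    (isTheta_Gamma_natCast_add_mul hc k)).trans_eventuallyEq ?_
  filter_upwards [eventually_gt_atTop 0] with n hn
  rw [show (b - c) * k = k * b - k * c by ring, rpow_sub (Nat.cast_pos.2 hn)]
  ring

end Real

theorem Polynomial.isTheta_eval_natCast {p : Polynomial ℂ} (hp : p ≠ 0) :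
    (fun n : ℕ => p.eval (n : ℂ)) =Θ[atTop] fun n : ℕ => (n : ℝ) ^ p.natDegree := by
  have h := isEquivalent_cobounded_leading_monomial (P := p) |>.isTheta
  refine (h.comp_tendsto tendsto_natCast_atTop_cobounded).trans ?_
  refine (isTheta_const_mul_left (leadingCoeff_ne_zero.2 hp)).2 (.of_norm_eventuallyEq ?_)
  exact .of_forall fun n => by simp

theorem isLittleO_natCast_rpow_rpow {a b : ℝ} (hab : a < b) :
    (fun n : ℕ => (n : ℝ) ^ a) =o[atTop] fun n : ℕ => (n : ℝ) ^ b := by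
  have h : (fun x : ℝ => x ^ a) =o[atTop] fun x => x ^ b := by
    refine (isLittleO_iff_tendsto' ?_).2 ?_
    · filter_upwards [eventually_gt_atTop 0] with x hx h
      exact absurd h (rpow_pos_of_pos hx b).ne'
    · refine (tendsto_rpow_neg_atTop (sub_pos.2 hab)).congr' ?_
      filter_upwards [eventually_gt_atTop 0] with x hx
      rw [← rpow_sub hx, neg_sub]
  exact h.comp_tendsto tendsto_natCast_atTop_atTop

theorem irrational_sqrt_two_sub_sqrt_three : Irrational (√2 - √3) := by
  have h6 : Irrational √6 := by norm_num
  refine .of_pow 2 ?_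
  have hsq : (√2 - √3) ^ 2 = (5 : ℚ) - (2 : ℕ) * √6 := by
    rw [sub_sq, sq_sqrt zero_le_two, sq_sqrt zero_le_three, mul_assoc, ← sqrt_mul zero_le_two]
    norm_num
    ring
  rw [hsq]
  exact Irrational.ratCast_sub 5 (h6.natCast_mul two_ne_zero)

theorem Irrational.eq_of_natCast_add_mul_eq {α : ℝ} (hα : Irrational α) {a b k j : ℕ}
    (h : (a : ℝ) + α * k = b + α * j) : k = j := by
  by_contra hkj
  have hne : (k : ℤ) - j ≠ 0 := sub_ne_zero.2 (by exact_mod_cast hkj)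
  exact (hα.intCast_mul hne).ne_int ((b : ℤ) - a) (by push_cast; linarith)

theorem Asymptotics.not_eventually_sum_eq_zero_of_isLittleO {α ι E F : Type*} [Fintype ι]
    [DecidableEq ι] [NormedAddCommGroup E] [NormedAddCommGroup F] {l : Filter α}
    {u : ι → α → E} {v : α → F} {m : ι} (hv : ∃ᶠ x in l, v x ≠ 0) (hm : v =O[l] u m)
    (ho : ∀ i ≠ m, u i =o[l] v) : ¬ ∀ᶠ x in l, ∑ i, u i x = 0 := by
  intro hsum
  have hrest : (fun x => ∑ i ∈ Finset.univ.erase m, u i x) =o[l] v :=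
    IsLittleO.fun_sum fun i hi => ho i (Finset.ne_of_mem_erase hi)
  have hum : (fun x => -∑ i ∈ Finset.univ.erase m, u i x) =ᶠ[l] u m := by
    filter_upwards [hsum] with x hx
    rw [← Finset.add_sum_erase _ _ (Finset.mem_univ m)] at hx
    exact (eq_neg_of_add_eq_zero_left hx).symm
  exact isLittleO_irrefl hv (hm.trans_isLittleO (hrest.neg_left.congr' hum EventuallyEq.rfl))

theorem not_isHolonomic_of_isTheta_shift {f : ℕ → ℂ} {g : ℕ → ℝ} {α : ℝ}
    (hα : Irrational α) (hg : ∃ᶠ n in atTop, g n ≠ 0)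
    (hshift : ∀ k : ℕ, (fun n => f (n + k)) =Θ[atTop] fun n => (n : ℝ) ^ (α * k) * g n) :
    ¬ IsHolonomic f := by
  rintro ⟨d, N, p, ⟨k₀, hk₀⟩, hrec⟩
  let e (k : Fin (d + 1)) : ℝ := (p k).natDegree + α * (k : ℕ)
  have hterm (k : Fin (d + 1)) (hk : p k ≠ 0) :
      (fun n : ℕ => (p k).eval (n : ℂ) * f (n + k)) =Θ[atTop]
        fun n => (n : ℝ) ^ e k * g n := by
    refine ((Polynomial.isTheta_eval_natCast hk).mul (hshift k)).trans_eventuallyEq ?_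
    filter_upwards [eventually_gt_atTop 0] with n hn
    rw [rpow_add (Nat.cast_pos.2 hn), rpow_natCast]
    ring
  obtain ⟨m, hm, hmax⟩ := (Finset.univ.filter fun k => p k ≠ 0).exists_max_image e
    ⟨k₀, by simpa using hk₀⟩
  have hpm : p m ≠ 0 := (Finset.mem_filter.1 hm).2
  refine not_eventually_sum_eq_zero_of_isLittleO (m := m) ?_ (hterm m hpm).2 ?_
    (eventually_atTop.2 ⟨N, hrec⟩)
  · refine (hg.and_eventually (eventually_gt_atTop 0)).mono fun n ⟨hgn, hn⟩ => ?_
    exact mul_ne_zero (rpow_pos_of_pos (Nat.cast_pos.2 hn) _).ne' hgn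
  · intro k hkm
    by_cases hpk : p k = 0
    · simp [hpk]
    have hlt : e k < e m := (hmax k (by simpa using hpk)).lt_of_ne
      fun h => hkm (Fin.ext (hα.eq_of_natCast_add_mul_eq h))
    exact (hterm k hpk).trans_isLittleO
      ((isLittleO_natCast_rpow_rpow hlt).mul_isBigO (isBigO_refl g _))

theorem not_isHolonomic_of_eq_Gamma_div_Gamma {b c : ℝ} (hb : 0 < b) (hc : 0 < c)
    (hbc : Irrational (b - c)) {f : ℕ → ℂ}
    (hf : ∀ᶠ n in atTop, f n = ((Gamma (n * b) / Gamma (n * c) : ℝ) : ℂ)) :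
    ¬ IsHolonomic f := by
  refine not_isHolonomic_of_isTheta_shift hbc (g := fun n => Gamma (n * b) / Gamma (n * c)) ?_
    fun k => ?_
  · refine Eventually.frequently ?_
    filter_upwards [eventually_gt_atTop 0] with n hn
    have hn : (0 : ℝ) < n := Nat.cast_pos.2 hn
    positivity
  · refine (IsTheta.of_norm_eventuallyEq_norm ?_).trans
      (isTheta_Gamma_div_Gamma_natCast_add hb hc k)
    filter_upwards [(tendsto_add_atTop_nat k).eventually hf] with n hn
    rw [hn, Complex.norm_real]

/-- Every sequence `f : ℕ → ℂ` satisfying `f(n) = Γ(n√2)/Γ(n√3)` for all `n ≥ 1`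
is not holonomic. -/
theorem gamma_ratio_not_holonomic
    (f : ℕ → ℂ)
    (hf : ∀ n : ℕ, 1 ≤ n →
      f n = ((Real.Gamma ((n : ℝ) * Real.sqrt 2) / Real.Gamma ((n : ℝ) * Real.sqrt 3) : ℝ) : ℂ)) :
    ¬ IsHolonomic f :=
  not_isHolonomic_of_eq_Gamma_div_Gamma (by positivity) (by positivity)
    irrational_sqrt_two_sub_sqrt_three (eventually_atTop.2 ⟨1, hf⟩)
end

section
/- Every sequence f : ℕ → ℂ satisfying f(n) = 1/ζ(n + 2) for all n ≥ 1, where ζ is the Riemann zeta function, is not holonomic. -/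
open Filter Polynomial Topology
open scoped ArithmeticFunction.Moebius

namespace Polynomial

variable {𝕜 : Type*} [RCLike 𝕜]

theorem tendsto_eval_natCast_mul_pow_atTop (p : 𝕜[X]) {c : 𝕜} (hc : ‖c‖ < 1) :
    Tendsto (fun n : ℕ => p.eval (n : 𝕜) * c ^ n) atTop (𝓝 0) := by
  have hmonomial (i : ℕ) : Tendsto (fun n : ℕ => (n : 𝕜) ^ i * c ^ n) atTop (𝓝 0) := by
    rw [tendsto_zero_iff_norm_tendsto_zero]
    simpa using tendsto_pow_const_mul_const_pow_of_abs_lt_one i (by simpa using hc)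
  simp_rw [eval_eq_sum_range, Finset.sum_mul, mul_assoc]
  simpa using tendsto_finsetSum _ fun i _ => (hmonomial i).const_mul (p.coeff i)

theorem eq_zero_of_tendsto_eval_natCast (q : 𝕜[X])
    (h : Tendsto (fun n : ℕ => q.eval (n : 𝕜)) atTop (𝓝 0)) : q = 0 := by
  rcases le_or_gt q.degree 0 with hdeg | hdeg
  · rw [eq_C_of_degree_le_zero hdeg] at h ⊢
    simpa using h
  · have hnat : Tendsto (fun n : ℕ => ‖(n : 𝕜)‖) atTop atTop := by
      simpa using tendsto_natCast_atTop_atTop (R := ℝ)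
    exact absurd h.norm (by
      simpa using not_tendsto_nhds_of_tendsto_atTop (q.tendsto_norm_atTop hdeg hnat) 0)

theorem tendsto_sum_mul_norm_eval_natCast_mul_pow_atTop {ι : Type*} [Fintype ι] (p : ι → 𝕜[X])
    (c : ι → ℝ) {ρ : ℝ} (hρ₀ : 0 ≤ ρ) (hρ₁ : ρ < 1) :
    Tendsto (fun n : ℕ => (∑ i, c i * ‖(p i).eval (n : 𝕜)‖) * ρ ^ n) atTop (𝓝 0) := by
  have hρ : ‖(ρ : 𝕜)‖ < 1 := by rwa [RCLike.norm_ofReal, abs_of_nonneg hρ₀]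
  have := tendsto_finsetSum Finset.univ fun i _ =>
    (tendsto_eval_natCast_mul_pow_atTop (p i) hρ).norm.const_mul (c i)
  simp only [norm_zero, mul_zero, Finset.sum_const_zero] at this
  refine this.congr fun n => ?_
  simp only [Finset.sum_mul, mul_assoc, norm_mul, norm_pow, RCLike.norm_ofReal, abs_of_nonneg hρ₀]

theorem exists_mem_sum_mul_C_pow_ne_zero {R ι : Type*} [CommRing R] [IsDomain R] {r : ℕ}
    (p : Fin r → R[X]) (hp : ∃ k, p k ≠ 0) {s : Set ι} (hs : s.Infinite) {y : ι → R}
    (hy : Function.Injective y) : ∃ i ∈ s, ∑ k, p k * C (y i) ^ (k : ℕ) ≠ 0 := by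
  obtain ⟨k₀, hk₀⟩ := hp
  set P : R[X][X] := ∑ k, C (p k) * X ^ (k : ℕ)
  have hP : P ≠ 0 := fun h => hk₀ <| by
    simpa [P, finsetSum_coeff, coeff_C_mul_X_pow, Fin.val_inj] using congr_arg (coeff · k₀) h
  by_contra! h
  refine hP (P.eq_zero_of_infinite_isRoot ((hs.image (C_injective.comp hy).injOn).mono ?_))
  rintro _ ⟨i, hi, rfl⟩
  simpa [P, eval_finsetSum] using h i hi

end Polynomial

theorem norm_le_of_hasSum_zero {ι E : Type*} [SeminormedAddCommGroup E] {g : ι → E} {c : ι → ℝ}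
    {a : ℝ} (hg : HasSum g 0) (hc : HasSum c a) (i : ι) (hgc : ∀ j ≠ i, ‖g j‖ ≤ c j)
    (hci : 0 ≤ c i) : ‖g i‖ ≤ a := by
  classical
  have h := hg.update i 0
  rw [zero_sub, add_zero] at h
  rw [← norm_neg]
  refine h.norm_le_of_bounded hc fun j => ?_
  rcases eq_or_ne j i with rfl | hj
  · simpa using hci
  · simpa [Function.update_of_ne hj] using hgc j hj

theorem hasSum_mul_pow_mul_sum_eval {R : Type*} [CommSemiring R] [TopologicalSpace R]
    [IsTopologicalSemiring R] {r n : ℕ} (p : Fin r → R[X]) (z : R) {b x f : ℕ → R}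
    (hf : ∀ k : Fin r, HasSum (fun m => b m * x m ^ (n + k)) (f (n + k))) :
    HasSum (fun m => b m * x m ^ n * ∑ k, (p k).eval z * x m ^ (k : ℕ))
      (∑ k, (p k).eval z * f (n + k)) := by
  refine (hasSum_sum fun k _ => (hf k).mul_left ((p k).eval z)).congr_fun fun m => ?_
  simp only [Finset.mul_sum, pow_add]
  exact Finset.sum_congr rfl fun k _ => by ring

section NormedField

variable {𝕜 : Type*} [NormedField 𝕜]

theorem norm_le_of_hasSum_mul_pow_eq_zero {b x q : ℕ → 𝕜} {A : ℝ} {M n : ℕ}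
    (hb : Summable fun m => ‖b m‖) (hx : StrictAnti fun m => ‖x m‖) (hq : ∀ m, ‖q m‖ ≤ A)
    (hlt : ∀ m < M, b m = 0 ∨ q m = 0) (hbM : b M ≠ 0)
    (hsum : HasSum (fun m => b m * x m ^ n * q m) 0) :
    ‖q M‖ ≤ (∑' m, ‖b m‖) / ‖b M‖ * (A * (‖x (M + 1)‖ / ‖x M‖) ^ n) := by
  have hxM : 0 < ‖x M‖ := (norm_nonneg _).trans_lt (hx (Nat.lt_succ_self M))
  have hA : 0 ≤ A := (norm_nonneg _).trans (hq 0)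
  have hdominant : ‖b M * x M ^ n * q M‖ ≤ (∑' m, ‖b m‖) * (‖x (M + 1)‖ ^ n * A) := by
    refine norm_le_of_hasSum_zero hsum (hb.hasSum.mul_right _) M (fun m hm => ?_) (by positivity)
    rcases hm.lt_or_gt with hmM | hMm
    · rcases hlt m hmM with h | h <;> simp only [h, zero_mul, mul_zero, norm_zero] <;> positivity
    · calc ‖b m * x m ^ n * q m‖ = ‖b m‖ * (‖x m‖ ^ n * ‖q m‖) := by
            rw [norm_mul, norm_mul, norm_pow, mul_assoc]
        _ ≤ ‖b m‖ * (‖x (M + 1)‖ ^ n * A) := by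
            gcongr
            exacts [hx.antitone hMm, hq m]
  rw [norm_mul, norm_mul, norm_pow] at hdominant
  have hbM' : 0 < ‖b M‖ := norm_pos_iff.2 hbM
  calc ‖q M‖ ≤ (∑' m, ‖b m‖) * (‖x (M + 1)‖ ^ n * A) / (‖b M‖ * ‖x M‖ ^ n) := by
        rw [le_div_iff₀ (by positivity)]
        linarith
    _ = _ := by rw [div_pow]; field_simp

theorem summable_mul_pow_of_summable_norm {ι : Type*} [CompleteSpace 𝕜] {b x : ι → 𝕜} {C : ℝ}
    (hb : Summable fun m => ‖b m‖) (hx : ∀ m, ‖x m‖ ≤ C) (n : ℕ) :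
    Summable fun m => b m * x m ^ n := by
  refine Summable.of_norm_bounded (hb.mul_right (C ^ n)) fun m => ?_
  rw [norm_mul, norm_pow]
  gcongr
  exact hx m

end NormedField

theorem not_isHolonomic_of_eventually_eq_tsum_mul_pow {f b x : ℕ → ℂ}
    (hb : Summable fun m => ‖b m‖) (hb_freq : ∃ᶠ m in atTop, b m ≠ 0)
    (hx : StrictAnti fun m => ‖x m‖) (hf : ∀ᶠ n in atTop, f n = ∑' m, b m * x m ^ n) :
    ¬ IsHolonomic f := by
  classical
  rintro ⟨d, N, p, hp, hrec⟩
  set Q : ℕ → ℂ[X] := fun m => ∑ k, p k * C (x m) ^ (k : ℕ)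
  have hQ_eval (m : ℕ) (z : ℂ) : (Q m).eval z = ∑ k, (p k).eval z * x m ^ (k : ℕ) := by
    simp [Q, eval_finsetSum]
  have hex := exists_mem_sum_mul_C_pow_ne_zero p hp
    (Nat.frequently_atTop_iff_infinite.1 hb_freq) hx.injective.of_comp
  set M := Nat.find hex
  obtain ⟨hbM, hQM⟩ : b M ≠ 0 ∧ Q M ≠ 0 := Nat.find_spec hex
  have hlt (m : ℕ) (hm : m < M) : b m = 0 ∨ Q m = 0 := by
    have := Nat.find_min hex hm
    tauto
  have hx₀ (m : ℕ) : ‖x m‖ ≤ ‖x 0‖ := hx.antitone (Nat.zero_le m)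
  set A : ℕ → ℝ := fun n => ∑ k : Fin (d + 1), ‖x 0‖ ^ (k : ℕ) * ‖(p k).eval (n : ℂ)‖
  have hQ_le (n m : ℕ) : ‖(Q m).eval (n : ℂ)‖ ≤ A n := by
    rw [hQ_eval]
    refine (norm_sum_le _ _).trans (Finset.sum_le_sum fun k _ => ?_)
    rw [norm_mul, norm_pow, mul_comm]
    gcongr
    exact hx₀ m
  have hbound : ∀ᶠ n : ℕ in atTop, ‖(Q M).eval (n : ℂ)‖ ≤
      (∑' m, ‖b m‖) / ‖b M‖ * (A n * (‖x (M + 1)‖ / ‖x M‖) ^ n) := by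
    obtain ⟨N', hN'⟩ := eventually_atTop.1 hf
    filter_upwards [eventually_ge_atTop (max N N')] with n hn
    refine norm_le_of_hasSum_mul_pow_eq_zero hb hx (hQ_le n) (fun m hm => ?_) hbM ?_
    · rcases hlt m hm with h | h <;> simp [h]
    have hfk (k : Fin (d + 1)) : HasSum (fun m => b m * x m ^ (n + k)) (f (n + k)) := by
      rw [hN' _ (by omega)]
      exact (summable_mul_pow_of_summable_norm hb hx₀ _).hasSum
    simpa [hQ_eval, hrec n (le_of_max_le_left hn)] using hasSum_mul_pow_mul_sum_eval p (n : ℂ) hfk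
  have hxM : 0 < ‖x M‖ := (norm_nonneg _).trans_lt (hx (Nat.lt_succ_self M))
  have hρ : ‖x (M + 1)‖ / ‖x M‖ < 1 := (div_lt_one hxM).2 (hx (Nat.lt_succ_self M))
  have htend := (tendsto_sum_mul_norm_eval_natCast_mul_pow_atTop p (fun k => ‖x 0‖ ^ (k : ℕ))
    (by positivity) hρ).const_mul ((∑' m, ‖b m‖) / ‖b M‖)
  rw [mul_zero] at htend
  exact hQM (eq_zero_of_tendsto_eval_natCast _ (squeeze_zero_norm' hbound htend))

theorem LSeries.term_natCast_add (a : ℕ → ℂ) (s : ℂ) (n m : ℕ) :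
    LSeries.term a (n + s) m = LSeries.term a s m * (m : ℂ)⁻¹ ^ n := by
  rcases eq_or_ne m 0 with rfl | hm
  · simp
  have hm' : (m : ℂ) ≠ 0 := Nat.cast_ne_zero.2 hm
  rw [LSeries.term_of_ne_zero hm, LSeries.term_of_ne_zero hm, Complex.cpow_add _ _ hm',
    Complex.cpow_natCast, inv_pow]
  field_simp

theorem LSeries_eq_tsum_term_succ (a : ℕ → ℂ) (s : ℂ) :
    LSeries a s = ∑' m, LSeries.term a s (m + 1) := by
  refine (Nat.succ_injective.tsum_eq fun m hm => ?_).symm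
  obtain ⟨k, rfl⟩ := Nat.exists_eq_succ_of_ne_zero (n := m) (by rintro rfl; simp at hm)
  exact ⟨k, rfl⟩

theorem LSeries_moebius_eq_one_div_riemannZeta {s : ℂ} (hs : 1 < s.re) :
    LSeries (fun n => (μ n : ℂ)) s = 1 / riemannZeta s :=
  eq_one_div_of_mul_eq_one_right <|
    LSeries_one_eq_riemannZeta hs ▸ LSeries_one_mul_Lseries_moebius hs

theorem LSeries.not_isHolonomic {f a : ℕ → ℂ} {s : ℂ} (ha : LSeriesSummable a s)
    (ha_freq : ∃ᶠ m in atTop, a m ≠ 0) (hf : ∀ᶠ n : ℕ in atTop, f n = LSeries a (n + s)) :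
    ¬ IsHolonomic f := by
  refine not_isHolonomic_of_eventually_eq_tsum_mul_pow (b := fun m => LSeries.term a s (m + 1))
    (x := fun m => ((m + 1 : ℕ) : ℂ)⁻¹) ?_ ?_ ?_ ?_
  · exact (summable_nat_add_iff 1).2 (summable_norm_iff.2 ha)
  · rw [← map_add_atTop_eq_nat 1, frequently_map] at ha_freq
    refine ha_freq.mono fun m hm => ?_
    simp [LSeries.term_of_ne_zero, hm, Nat.cast_add_one_ne_zero]
  · refine strictAnti_nat_of_succ_lt fun m => ?_
    simp only [norm_inv, Complex.norm_natCast]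
    gcongr
    omega
  · refine hf.mono fun n hn => ?_
    simp only [hn, LSeries_eq_tsum_term_succ, LSeries.term_natCast_add]

/-- Every sequence `f : ℕ → ℂ` satisfying `f(n) = 1/ζ(n+2)` for all `n ≥ 1`, where `ζ` is
the Riemann zeta function, is not holonomic. -/
theorem one_div_zeta_not_holonomic
    (f : ℕ → ℂ) (hf : ∀ n : ℕ, 1 ≤ n → f n = 1 / riemannZeta ((n : ℂ) + 2)) :
    ¬ IsHolonomic f := by
  refine LSeries.not_isHolonomic (a := fun n => (μ n : ℂ)) (s := 2)
    (ArithmeticFunction.LSeriesSummable_moebius_iff.2 (by norm_num)) ?_ ?_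
  · refine Nat.frequently_atTop_iff_infinite.2 (Nat.infinite_setOfPred_prime.mono fun q hq => ?_)
    simp [ArithmeticFunction.moebius_apply_prime hq]
  · filter_upwards [eventually_ge_atTop 1] with n hn
    have hre : 1 < ((n : ℂ) + 2).re := by
      rw [Complex.add_re, Complex.natCast_re, Complex.re_ofNat]
      linarith [(n.cast_nonneg : (0 : ℝ) ≤ n)]
    rw [hf n hn, LSeries_moebius_eq_one_div_riemannZeta hre]
end
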